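/- Let Φ be a positive unital linear map from a commutative *-subalgebra A of M_m(ℂ) to M_n(ℂ). Then there exist a finite-dimensional Hilbert space F containing ℂⁿ (with dim F ≤ nm) and a unital *-homomorphism π : A → L(F) such that for all X in A, Φ(X) equals the compression of π(X) to ℂⁿ. -/

import Mathlib

open Matrix
open scoped ComplexOrder Kronecker

/-- Functional calculus for Hermitian matrices: apply `f : ℝ → ℝ` to the eigenvalues in a
spectral decomposition (junk value `0` if the matrix is not Hermitian). -/
noncomputable def hermCFC {ι : Type*} [Fintype ι] [DecidableEq ι]
    (M : Matrix ι ι ℂ) (f : ℝ → ℝ) : Matrix ι ι ℂ :=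
  if h : M.IsHermitian then h.cfc f else 0

/-- Eigenvalues of a Hermitian matrix listed in decreasing order:
`eigDesc M j` is the `(j+1)`-th largest eigenvalue (junk value `0` if not Hermitian). -/
noncomputable def eigDesc {n : ℕ} (M : Matrix (Fin n) (Fin n) ℂ) : Fin n → ℝ :=
  if h : M.IsHermitian then fun j => h.eigenvalues (Tuple.sort h.eigenvalues j.rev) else 0

/-- Eigenvalues of a Hermitian matrix listed in increasing order:
`eigAsc M j` is the `(j+1)`-th smallest eigenvalue (junk value `0` if not Hermitian). -/
noncomputable def eigAsc {n : ℕ} (M : Matrix (Fin n) (Fin n) ℂ) : Fin n → ℝ :=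
  if h : M.IsHermitian then fun j => h.eigenvalues (Tuple.sort h.eigenvalues j) else 0

/-- The absolute value `|X| = (XᴴX)^(1/2)` of a matrix. -/
noncomputable def matAbs {n : ℕ} (X : Matrix (Fin n) (Fin n) ℂ) : Matrix (Fin n) (Fin n) ℂ :=
  (Matrix.posSemidef_conjTranspose_mul_self X).1.eigenvectorUnitary.1 *
    diagonal ((↑) ∘ (Real.sqrt ∘ (Matrix.posSemidef_conjTranspose_mul_self X).1.eigenvalues)) *
    (star (Matrix.posSemidef_conjTranspose_mul_self X).1.eigenvectorUnitary : Matrix (Fin n) (Fin n) ℂ)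

/-- The Loewner order: `X ≤ Y` iff `Y - X` is positive semidefinite. -/
def loewnerLE {n : ℕ} (X Y : Matrix (Fin n) (Fin n) ℂ) : Prop := (Y - X).PosSemidef

/-!
In `S` the identity `star x * x = 0` forces `x = 0`, so the commutative finite-dimensional algebra
`S` is reduced, hence `≅ ℂᵏ`. Idempotents of `S` are then self-adjoint, which makes this a
*-isomorphism, and its minimal projections `Eᵢ` are nonzero orthogonal idempotent matrices, so
`k ≤ m`. With the characters `χᵢ` of `S`, `Φ x = ∑ χᵢ(x) Aᵢ` where `Aᵢ = Φ(Eᵢ) ≥ 0` and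
`∑ Aᵢ = 1`. Factoring `Aᵢ = Bᵢᴴ Bᵢ`, the column `V` of the blocks `Bᵢ` is an isometry `ℂⁿ → ℂᵏⁿ`
with `Vᴴ diag(χᵢ(x) ⊗ 1ₙ) V = Φ x`; completing `V` to a unitary `U` makes
`x ↦ Uᴴ diag(χᵢ(x) ⊗ 1ₙ) U` the required *-homomorphism.
-/

theorem exists_algEquiv_pi_of_isReduced (K R : Type*) [Field K] [IsAlgClosed K] [CommRing R]
    [Algebra K R] [FiniteDimensional K R] [IsReduced R] :
    ∃ k : ℕ, Nonempty (R ≃ₐ[K] (Fin k → K)) := by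
  have : IsArtinianRing R := isArtinian_of_tower K inferInstance
  have residue (I : MaximalSpectrum R) : (R ⧸ I.asIdeal) ≃ₐ[K] K := by
    have := Module.Finite.of_surjective (Ideal.Quotient.mkₐ K I.asIdeal).toLinearMap
      (Ideal.Quotient.mkₐ_surjective K I.asIdeal)
    exact (AlgEquiv.ofBijective (Algebra.ofId K _)
      IsAlgClosed.algebraMap_bijective_of_isIntegral).symm
  let f : R →ₐ[K] ∀ I : MaximalSpectrum R, R ⧸ I.asIdeal :=
    AlgHom.pi fun I => Ideal.Quotient.mkₐ K I.asIdeal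
  have hf : Function.Bijective f := (IsArtinianRing.equivPi R).bijective
  exact ⟨Nat.card (MaximalSpectrum R), ⟨(AlgEquiv.ofBijective f hf).trans <|
    (AlgEquiv.piCongrRight residue).trans <|
      AlgEquiv.piCongrLeft' K (fun _ => K) (Finite.equivFin _)⟩⟩

section StarMulSelfEqZero

variable {R : Type*} [CommRing R] [StarRing R]

theorem isReduced_of_star_mul_self_eq_zero (h : ∀ x : R, star x * x = 0 → x = 0) :
    IsReduced R := by
  refine (isReduced_iff_pow_one_lt 2 one_lt_two).2 fun x hx => h x (h _ ?_)
  calc star (star x * x) * (star x * x) = star (x ^ 2) * x ^ 2 := by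
        rw [star_mul, star_star, star_pow]; ring
    _ = 0 := by rw [hx, mul_zero]

theorem isSelfAdjoint_of_isIdempotentElem (h : ∀ x : R, star x * x = 0 → x = 0) {p : R}
    (hp : IsIdempotentElem p) : IsSelfAdjoint p := by
  have hsp : IsIdempotentElem (star p) := hp.star
  -- `star q * q = (p*² - p*) (p² - p)` for `q = p - p* p`
  have hq : p - star p * p = 0 := h _ <| by
    rw [star_sub, star_mul, star_star]
    linear_combination (p * p - p) * hsp.eq
  rw [sub_eq_zero] at hq
  rw [IsSelfAdjoint, hq, star_mul, star_star, mul_comm]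

end StarMulSelfEqZero

theorem exists_starAlgEquiv_pi (A : Type*) [CommRing A] [StarRing A] [Algebra ℂ A]
    [StarModule ℂ A] [FiniteDimensional ℂ A] (h : ∀ x : A, star x * x = 0 → x = 0) :
    ∃ k : ℕ, Nonempty (A ≃⋆ₐ[ℂ] (Fin k → ℂ)) := by
  have := isReduced_of_star_mul_self_eq_zero h
  obtain ⟨k, ⟨e⟩⟩ := exists_algEquiv_pi_of_isReduced ℂ A
  refine ⟨k, ⟨StarAlgEquiv.ofAlgEquiv e fun x => funext fun i => ?_⟩⟩
  set p := e.symm (Pi.single i 1)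
  have hp : star p = p := isSelfAdjoint_of_isIdempotentElem h <|
    ((CompleteOrthogonalIdempotents.single fun _ => ℂ).idem i).map e.symm
  have hp0 : p ≠ 0 := by simp [p]
  have mul_p (y : A) : y * p = e y i • p := e.injective <| by
    ext j; by_cases hj : j = i <;> simp [p, hj]
  apply smul_left_injective ℂ hp0
  calc e (star x) i • p = star (x * p) := by rw [← mul_p, star_mul, hp, mul_comm]
    _ = star (e x i) • p := by rw [mul_p, star_smul, hp]

theorem OrthogonalIdempotents.card_le_finrank {K V ι : Type*} [Field K] [AddCommGroup V]
    [Module K V] [FiniteDimensional K V] [Fintype ι] {e : ι → Module.End K V}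
    (he : OrthogonalIdempotents e) (hne : ∀ i, e i ≠ 0) :
    Fintype.card ι ≤ Module.finrank K V := by
  classical
  have (i : ι) : ∃ v, e i v ≠ 0 := by
    by_contra! h
    exact hne i (LinearMap.ext h)
  choose v hv using this
  refine LinearIndependent.fintype_card_le_finrank (b := fun i => e i (v i)) ?_
  rw [Fintype.linearIndependent_iff]
  intro g hg j
  have hproj (i : ι) : e j (g i • e i (v i)) = if i = j then g j • e j (v j) else 0 := by
    rw [map_smul, ← Module.End.mul_apply]
    split_ifs with hij
    · rw [hij, (he.idem j).eq]
    · rw [he.ortho (Ne.symm hij), LinearMap.zero_apply, smul_zero]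
  have hj : g j • e j (v j) = 0 := by simpa [hproj] using congr(e j $hg)
  exact (smul_eq_zero.mp hj).resolve_right (hv j)

theorem exists_starAlgEquiv_pi_of_commute {m : ℕ}
    (S : StarSubalgebra ℂ (Matrix (Fin m) (Fin m) ℂ)) (hcomm : ∀ x y : S, x * y = y * x) :
    ∃ k ≤ m, Nonempty (S ≃⋆ₐ[ℂ] (Fin k → ℂ)) := by
  let _ : CommRing S := { (inferInstance : Ring S) with mul_comm := hcomm }
  have : FiniteDimensional ℂ S :=
    FiniteDimensional.finiteDimensional_submodule S.toSubalgebra.toSubmodule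
  obtain ⟨k, ⟨e⟩⟩ := exists_starAlgEquiv_pi S fun x hx =>
    Subtype.ext <| conjTranspose_mul_self_eq_zero.mp congr(Subtype.val $hx)
  refine ⟨k, ?_, ⟨e⟩⟩
  let f : (Fin k → ℂ) →ₐ[ℂ] Module.End ℂ (Fin m → ℂ) :=
    (Matrix.toLinAlgEquiv' : Matrix (Fin m) (Fin m) ℂ ≃ₐ[ℂ] _).toAlgHom.comp
      (S.subtype.toAlgHom.comp e.symm.toAlgEquiv.toAlgHom)
  have hf : Function.Injective f :=
    Matrix.toLinAlgEquiv'.injective.comp (Subtype.val_injective.comp e.symm.injective)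
  simpa using ((CompleteOrthogonalIdempotents.single fun _ : Fin k => ℂ).map
    f.toRingHom).card_le_finrank fun i => (map_ne_zero_iff f hf).2 (by simp)

namespace Matrix

variable {ι κ n R : Type*} [CommSemiring R] [StarRing R]

def diagonalCompStarAlgHom [Fintype ι] [DecidableEq ι] (f : ι → κ) :
    (κ → R) →⋆ₐ[R] Matrix ι ι R where
  toFun c := diagonal (c ∘ f)
  map_one' := diagonal_one
  map_mul' _ _ := (diagonal_mul_diagonal _ _).symm
  map_zero' := diagonal_zero
  map_add' _ _ := (diagonal_add _ _).symm
  commutes' r := (algebraMap_eq_diagonal r).symm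
  map_star' c := (diagonal_conjTranspose (c ∘ f)).symm

@[simp]
theorem diagonalCompStarAlgHom_apply [Fintype ι] [DecidableEq ι] (f : ι → κ) (c : κ → R) :
    diagonalCompStarAlgHom f c = diagonal (c ∘ f) := rfl

def blockColumn (B : κ → Matrix ι n R) : Matrix (κ × ι) n R :=
  of fun p => B p.1 p.2

theorem conjTranspose_blockColumn_mul_diagonal_mul_blockColumn [Fintype ι] [Fintype κ]
    [DecidableEq ι] [DecidableEq κ] (B : κ → Matrix ι n R) (c : κ → R) :
    (blockColumn B)ᴴ * diagonal (fun p : κ × ι => c p.1) * blockColumn B =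
      ∑ i, c i • ((B i)ᴴ * B i) := by
  ext a b
  rw [mul_apply]
  simp only [mul_diagonal, sum_apply, smul_apply, Fintype.sum_prod_type, blockColumn,
    conjTranspose_apply, of_apply, smul_eq_mul]
  refine Finset.sum_congr rfl fun i _ => ?_
  rw [mul_apply, Finset.mul_sum]
  exact Finset.sum_congr rfl fun _ _ => by rw [conjTranspose_apply]; ring

theorem PosSemidef.exists_eq_conjTranspose_mul_self {𝕜 : Type*} [RCLike 𝕜] [Fintype n]
    [DecidableEq n] {A : Matrix n n 𝕜} (hA : A.PosSemidef) : ∃ B, A = Bᴴ * B := by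
  open scoped MatrixOrder in exact CStarAlgebra.nonneg_iff_eq_star_mul_self.mp hA.nonneg

theorem orthonormal_iff_conjTranspose_mul_self {𝕜 : Type*} [RCLike 𝕜] [Fintype ι]
    [DecidableEq n] (V : Matrix ι n 𝕜) :
    Orthonormal 𝕜 (fun a => WithLp.toLp 2 fun p => V p a) ↔ Vᴴ * V = 1 := by
  rw [orthonormal_iff_ite, ← Matrix.ext_iff]
  refine forall₂_congr fun a b => ?_
  simp [PiLp.inner_apply, mul_apply, one_apply, mul_comm]

theorem exists_mem_unitary_submatrix_castLE {𝕜 : Type*} [RCLike 𝕜] {n d : ℕ} (hd : n ≤ d)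
    (V : Matrix (Fin d) (Fin n) 𝕜) (hV : Vᴴ * V = 1) :
    ∃ U ∈ unitary (Matrix (Fin d) (Fin d) 𝕜), U.submatrix id (Fin.castLE hd) = V := by
  let w : Fin d → EuclideanSpace 𝕜 (Fin d) := fun p =>
    if h : (p : ℕ) < n then WithLp.toLp 2 fun q => V q ⟨p, h⟩ else 0
  let s : Set (Fin d) := {p | (p : ℕ) < n}
  have hw : Orthonormal 𝕜 (s.domRestrict w) := by
    convert ((orthonormal_iff_conjTranspose_mul_self V).2 hV).comp (fun p : s => ⟨p, p.2⟩)
      fun p q h => Subtype.ext (Fin.ext congr(Fin.val $h))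
    ext1 p
    exact dif_pos p.2
  obtain ⟨b, hb⟩ := hw.exists_orthonormalBasis_extension_of_card_eq (by simp)
  refine ⟨(EuclideanSpace.basisFun (Fin d) 𝕜).toBasis.toMatrix b,
    (EuclideanSpace.basisFun _ _).toMatrix_orthonormalBasis_mem_unitary b, ?_⟩
  ext p a
  simp [Module.Basis.toMatrix_apply, hb _ (show ((Fin.castLE hd a : Fin d) : ℕ) < n from a.2), w]

end Matrix

theorem exists_starAlgHom_submatrix_eq_sum_smul {k n : ℕ} (A : Fin k → Matrix (Fin n) (Fin n) ℂ)
    (hA : ∀ i, (A i).PosSemidef) (hsum : ∑ i, A i = 1) :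
    ∃ d : ℕ, ∃ hd : n ≤ d, d ≤ k * n ∧ ∃ ρ : (Fin k → ℂ) →⋆ₐ[ℂ] Matrix (Fin d) (Fin d) ℂ,
      ∀ c, ∑ i, c i • A i = (ρ c).submatrix (Fin.castLE hd) (Fin.castLE hd) := by
  choose B hB using fun i => (hA i).exists_eq_conjTranspose_mul_self
  let σ : Fin k × Fin n ≃ Fin (k * n) := finProdFinEquiv
  let V : Matrix (Fin (k * n)) (Fin n) ℂ := (blockColumn B).submatrix σ.symm id
  have hV (c : Fin k → ℂ) :
      Vᴴ * diagonal (c ∘ fun p => (σ.symm p).1) * V = ∑ i, c i • A i := by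
    change Vᴴ * diagonal ((fun p : Fin k × Fin n => c p.1) ∘ σ.symm) * V = _
    rw [← submatrix_diagonal_equiv, conjTranspose_submatrix, submatrix_mul_equiv,
      submatrix_mul_equiv, submatrix_id_id, conjTranspose_blockColumn_mul_diagonal_mul_blockColumn]
    simp only [hB]
  have hn : n ≤ k * n := by
    rcases Nat.eq_zero_or_pos n with rfl | hn
    · exact le_rfl
    refine Nat.le_mul_of_pos_left n (Nat.pos_of_ne_zero fun hk => ?_)
    subst hk
    have : Nonempty (Fin n) := ⟨⟨0, hn⟩⟩
    simp at hsum
  obtain ⟨U, hU, hUV⟩ := exists_mem_unitary_submatrix_castLE hn V (by simpa [hsum] using hV 1)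
  refine ⟨k * n, hn, le_rfl, (Unitary.conjStarAlgAut ℂ _ (star ⟨U, hU⟩)).toStarAlgHom.comp
    (diagonalCompStarAlgHom fun p => (σ.symm p).1), fun c => ?_⟩
  simp only [StarAlgHom.comp_apply, StarAlgEquiv.toStarAlgHom_apply, Unitary.conjStarAlgAut_apply,
    Unitary.coe_star, star_star, diagonalCompStarAlgHom_apply]
  rw [← hV, ← hUV, submatrix_mul _ _ _ id _ Function.bijective_id,
    submatrix_mul _ _ _ id _ Function.bijective_id, submatrix_id_id, conjTranspose_submatrix,
    star_eq_conjTranspose]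

/-- Stinespring-type lemma: a positive unital linear map `Φ` from a commutative *-subalgebra
`S` of `M_m(ℂ)` to `M_n(ℂ)` is the compression of a unital *-homomorphism `π` into `M_d(ℂ)`
for some `n ≤ d ≤ n·m` (compression onto the first `n` coordinates). -/
theorem stmt8 {m n : ℕ} (S : StarSubalgebra ℂ (Matrix (Fin m) (Fin m) ℂ))
    (hcomm : ∀ x y : S, x * y = y * x)
    (Φ : S →ₗ[ℂ] Matrix (Fin n) (Fin n) ℂ)
    (hpos : ∀ x : S, (x : Matrix (Fin m) (Fin m) ℂ).PosSemidef → (Φ x).PosSemidef)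
    (hunital : Φ 1 = 1) :
    ∃ d : ℕ, ∃ hd : n ≤ d, d ≤ n * m ∧
      ∃ π : S →⋆ₐ[ℂ] Matrix (Fin d) (Fin d) ℂ,
        ∀ x : S, Φ x = (π x).submatrix (Fin.castLE hd) (Fin.castLE hd) := by
  obtain ⟨k, hkm, ⟨e⟩⟩ := exists_starAlgEquiv_pi_of_commute S hcomm
  have hsingle := CompleteOrthogonalIdempotents.single fun _ : Fin k => ℂ
  let E (i : Fin k) : S := e.symm (Pi.single i 1)
  have hE (i : Fin k) : (E i : Matrix (Fin m) (Fin m) ℂ).PosSemidef := by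
    have hproj : IsStarProjection (Pi.single i 1 : Fin k → ℂ) :=
      ⟨hsingle.idem i, by simp [IsSelfAdjoint]⟩
    open scoped MatrixOrder in
    exact (hproj.map (S.subtype.comp e.symm.toStarAlgHom)).nonneg.posSemidef
  have hΦ (x : S) : Φ x = ∑ i, e x i • Φ (E i) := by
    have he : e x = ∑ i, e x i • Pi.single i 1 := by
      simpa using ((Pi.basisFun ℂ (Fin k)).sum_repr (e x)).symm
    conv_lhs => rw [← e.symm_apply_apply x, he]
    simp [E]
  obtain ⟨d, hd, hdk, ρ, hρ⟩ := exists_starAlgHom_submatrix_eq_sum_smul (fun i => Φ (E i))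
    (fun i => hpos _ (hE i)) (by rw [← map_sum, ← map_sum, hsingle.complete, map_one, hunital])
  exact ⟨d, hd, hdk.trans ((Nat.mul_le_mul_right n hkm).trans_eq (Nat.mul_comm m n)),
    ρ.comp e.toStarAlgHom, fun x => (hΦ x).trans (hρ (e x))⟩
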